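/- arXiv:2202.04032 — 2 statements merged into one kernel-verified Lean document; each statement's English description precedes it below -/
import Mathlib

section
/- Let Φ be the holomorphic function on an open set U ⊇ [0,1) obtained as the locally uniform limit of 4^N P^{∘N}, satisfying Φ(0)=0, Φ'(0)=1 and Φ(P(z)) = Φ(z)/4. Then for every p ∈ (0,1] and every integer i ≥ 0, lim_{N→∞} [ (P^{∘N})^{(i)}(1-p) · p^{i-1} ] / [ (P^{∘N})'(1-p) · i! ] = Φ^{(i)}(1-p) · p^{i-1} / ( Φ'(1-p) · i! ), where (P^{∘N})^{(i)} denotes the i-th derivative of the N-fold iterate of P. -/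
open Filter

/-- The cubic polynomial `P(z) = (z + 2z² + z³)/4`. -/
noncomputable def P : ℂ → ℂ := fun z => (z + 2 * z ^ 2 + z ^ 3) / 4

/-!
Normalised by `4^N`, the iterates `4^N P^{∘N}` converge locally uniformly to `Φ`, hence so do all
their derivatives (Weierstrass). The common factor `4^N` cancels in the ratio, so the claim reduces
to `Φ'(1-p) ≠ 0`. Differentiating the functional equation gives `Φ'(P x) P'(x) = Φ'(x)/4`, and
`P' > 0` on `[0,1)`, so a zero of `Φ'` at `x = 1-p` would propagate along the orbit `P^{∘N}(x)`.
That orbit stays in `[0,1)` and tends to `0` (since `4^N P^{∘N}(x)` converges), so continuity of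
`Φ'` would force `Φ'(0) = 0`, contradicting `Φ'(0) = 1`.
-/

open Set Topology

section IterateDeriv

variable {𝕜 : Type*} [NontriviallyNormedField 𝕜] {Φ f : 𝕜 → 𝕜} {U S : Set 𝕜} {c : 𝕜}

theorem deriv_mul_deriv_eq_of_comp_eq_div {z : 𝕜} (hU : U ∈ 𝓝 z)
    (hfe : ∀ w ∈ U, Φ (f w) = Φ w / c) (hΦ : DifferentiableAt 𝕜 Φ (f z))
    (hf : DifferentiableAt 𝕜 f z) :
    deriv Φ (f z) * deriv f z = deriv Φ z / c := by
  have hcomp : Φ ∘ f =ᶠ[𝓝 z] fun w => Φ w / c := Filter.eventually_of_mem hU hfe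
  rw [← deriv_comp z hΦ hf, hcomp.deriv_eq, deriv_div_const]

theorem deriv_iterate_eq_zero_of_comp_eq_div (hU : IsOpen U) (hSU : S ⊆ U)
    (hS : MapsTo f S S) (hfe : ∀ w ∈ U, Φ (f w) = Φ w / c) (hΦ : DifferentiableOn 𝕜 Φ U)
    (hf : ∀ w ∈ S, DifferentiableAt 𝕜 f w) (hf' : ∀ w ∈ S, deriv f w ≠ 0)
    {z : 𝕜} (hz : z ∈ S) (h : deriv Φ z = 0) (n : ℕ) : deriv Φ (f^[n] z) = 0 := by
  induction n with
  | zero => exact h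
  | succ n ih =>
    have hw : f^[n] z ∈ S := hS.iterate n hz
    have hΦw : DifferentiableAt 𝕜 Φ (f (f^[n] z)) :=
      hΦ.differentiableAt (hU.mem_nhds (hSU (hS hw)))
    have key := deriv_mul_deriv_eq_of_comp_eq_div (hU.mem_nhds (hSU hw)) hfe hΦw (hf _ hw)
    rw [ih, zero_div, mul_eq_zero] at key
    rw [Function.iterate_succ_apply']
    exact key.resolve_right (hf' _ hw)

theorem deriv_ne_zero_of_tendsto_iterate (hU : IsOpen U) (hSU : S ⊆ U)
    (hS : MapsTo f S S) (hfe : ∀ w ∈ U, Φ (f w) = Φ w / c) (hΦ : DifferentiableOn 𝕜 Φ U)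
    (hf : ∀ w ∈ S, DifferentiableAt 𝕜 f w) (hf' : ∀ w ∈ S, deriv f w ≠ 0)
    {z w : 𝕜} (hz : z ∈ S) (horbit : Tendsto (fun n => f^[n] z) atTop (𝓝 w))
    (hcont : ContinuousAt (deriv Φ) w) (hw : deriv Φ w ≠ 0) : deriv Φ z ≠ 0 := by
  intro h
  have hzero := deriv_iterate_eq_zero_of_comp_eq_div hU hSU hS hfe hΦ hf hf' hz h
  refine hw (tendsto_nhds_unique (hcont.tendsto.comp horbit) ?_)
  simp only [Function.comp_def, hzero, tendsto_const_nhds]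

end IterateDeriv

theorem tendsto_zero_of_tendsto_pow_mul {R : Type*} [NormedDivisionRing R] {a : R}
    (ha : 1 < ‖a‖) {u : ℕ → R} {L : R} (h : Tendsto (fun n => a ^ n * u n) atTop (𝓝 L)) :
    Tendsto u atTop (𝓝 0) := by
  have ha0 : a ≠ 0 := norm_pos_iff.mp (one_pos.trans ha)
  have hinv : Tendsto (fun n => a⁻¹ ^ n) atTop (𝓝 0) :=
    tendsto_pow_atTop_nhds_zero_of_norm_lt_one (by rwa [norm_inv, inv_lt_one₀ (one_pos.trans ha)])
  simpa [← mul_assoc, inv_pow, inv_mul_cancel₀ (pow_ne_zero _ ha0)] using hinv.mul h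

theorem TendstoLocallyUniformlyOn.iteratedDeriv {ι E : Type*} [NormedAddCommGroup E]
    [NormedSpace ℂ E] [CompleteSpace E] {F : ι → ℂ → E} {f : ℂ → E} {l : Filter ι} {U : Set ℂ}
    (hf : TendstoLocallyUniformlyOn F f l U) (hF : ∀ᶠ n in l, DifferentiableOn ℂ (F n) U)
    (hU : IsOpen U) (k : ℕ) :
    TendstoLocallyUniformlyOn (fun n => iteratedDeriv k (F n)) (iteratedDeriv k f) l U := by
  simp only [iteratedDeriv_eq_iterate]
  induction k with
  | zero => exact hf
  | succ k ih =>
    simp only [Function.iterate_succ_apply']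
    refine ih.deriv ?_ hU
    filter_upwards [hF] with n hn
    exact ((hn.analyticOnNhd hU).iterated_deriv k).differentiableOn

theorem differentiable_P : Differentiable ℂ P := by
  unfold P; fun_prop

theorem hasDerivAt_P (z : ℂ) : HasDerivAt P ((1 + 4 * z + 3 * z ^ 2) / 4) z := by
  have h := (((hasDerivAt_id' z).fun_add ((hasDerivAt_pow 2 z).const_mul 2)).fun_add
    (hasDerivAt_pow 3 z)).div_const 4
  exact h.congr_deriv (by push_cast; ring)

theorem mapsTo_P_Ico : MapsTo P (((↑) : ℝ → ℂ) '' Ico 0 1) (((↑) : ℝ → ℂ) '' Ico 0 1) := by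
  rintro _ ⟨x, ⟨hx0, hx1⟩, rfl⟩
  refine ⟨(x + 2 * x ^ 2 + x ^ 3) / 4, ⟨by positivity, by nlinarith⟩, ?_⟩
  simp only [P]
  push_cast
  ring

theorem deriv_P_ne_zero {x : ℝ} (hx : 0 ≤ x) : deriv P x ≠ 0 := by
  rw [(hasDerivAt_P x).deriv]
  exact_mod_cast (by positivity : (1 + 4 * x + 3 * x ^ 2) / 4 ≠ 0)

theorem stmt9_general (U : Set ℂ) (hU : IsOpen U)
    (hIco : ∀ x : ℝ, x ∈ Set.Ico (0 : ℝ) 1 → (x : ℂ) ∈ U)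
    (Φ : ℂ → ℂ) (hΦ : DifferentiableOn ℂ Φ U)
    (hlim : TendstoLocallyUniformlyOn
      (fun (N : ℕ) (z : ℂ) => (4 : ℂ) ^ N * P^[N] z) Φ atTop U)
    (h1 : deriv Φ 0 = 1)
    (hfe : ∀ z ∈ U, Φ (P z) = Φ z / 4)
    (p : ℝ) (hp : p ∈ Set.Ioc (0 : ℝ) 1) (i : ℕ) :
    Tendsto
      (fun N : ℕ =>
        iteratedDeriv i (P^[N]) ((1 : ℂ) - p) * (p : ℂ) ^ ((i : ℤ) - 1) /
          (deriv (P^[N]) ((1 : ℂ) - p) * (i.factorial : ℂ)))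
      atTop
      (nhds (iteratedDeriv i Φ ((1 : ℂ) - p) * (p : ℂ) ^ ((i : ℤ) - 1) /
        (deriv Φ ((1 : ℂ) - p) * (i.factorial : ℂ)))) := by
  set S : Set ℂ := ((↑) : ℝ → ℂ) '' Ico 0 1
  have hSU : S ⊆ U := by
    rintro _ ⟨x, hx, rfl⟩
    exact hIco x hx
  have hz₀ : (1 : ℂ) - p ∈ S :=
    ⟨1 - p, ⟨by linarith [hp.2], by linarith [hp.1]⟩, by push_cast; rfl⟩
  have hderivs (k : ℕ) : Tendsto (fun N => (4 : ℂ) ^ N * iteratedDeriv k (P^[N]) (1 - p)) atTop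
      (𝓝 (iteratedDeriv k Φ (1 - p))) := by
    have h := (hlim.iteratedDeriv (Eventually.of_forall fun N =>
      ((differentiable_P.iterate N).const_mul _).differentiableOn) hU k).tendsto_at (hSU hz₀)
    simpa only [iteratedDeriv_const_mul_field] using h
  have horbit : Tendsto (fun N => P^[N] (1 - p)) atTop (𝓝 0) :=
    tendsto_zero_of_tendsto_pow_mul (by norm_num) (hlim.tendsto_at (hSU hz₀))
  have hΦ' : deriv Φ (1 - p) ≠ 0 := by
    have h0U : (0 : ℂ) ∈ U := by simpa using hIco 0 (by simp)
    refine deriv_ne_zero_of_tendsto_iterate hU hSU mapsTo_P_Ico hfe hΦ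
      (fun w _ => differentiable_P w) ?_ hz₀ horbit
      ((hΦ.analyticOnNhd hU).deriv.continuousOn.continuousAt (hU.mem_nhds h0U)) (by simp [h1])
    rintro _ ⟨x, hx, rfl⟩
    exact deriv_P_ne_zero hx.1
  have hderiv : Tendsto (fun N => (4 : ℂ) ^ N * deriv (P^[N]) (1 - p)) atTop
      (𝓝 (deriv Φ (1 - p))) := by
    simpa only [iteratedDeriv_one] using hderivs 1
  have hfac : (i.factorial : ℂ) ≠ 0 := by exact_mod_cast i.factorial_ne_zero
  refine (((hderivs i).mul_const _).div (hderiv.mul_const _) (mul_ne_zero hΦ' hfac)).congr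
    fun N => ?_
  rw [Pi.div_apply, mul_assoc, mul_assoc, mul_div_mul_left _ _ (pow_ne_zero N (by norm_num))]

/-- let `Φ` be the holomorphic function on an open set `U ⊇ [0,1)` obtained as
the locally uniform limit of `4^N P^{∘N}`, with `Φ(0) = 0`, `Φ'(0) = 1`,
`Φ(P(z)) = Φ(z)/4`. Then for every `p ∈ (0,1]` and every `i ≥ 0`,
`(P^{∘N})^{(i)}(1-p) p^{i-1} / ((P^{∘N})'(1-p) i!) → Φ^{(i)}(1-p) p^{i-1} / (Φ'(1-p) i!)`. -/
theorem stmt9 (U : Set ℂ) (hU : IsOpen U)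
    (hIco : ∀ x : ℝ, x ∈ Set.Ico (0 : ℝ) 1 → (x : ℂ) ∈ U)
    (Φ : ℂ → ℂ) (hΦ : DifferentiableOn ℂ Φ U)
    (hlim : TendstoLocallyUniformlyOn
      (fun (N : ℕ) (z : ℂ) => (4 : ℂ) ^ N * P^[N] z) Φ atTop U)
    (h0 : Φ 0 = 0) (h1 : deriv Φ 0 = 1)
    (hfe : ∀ z ∈ U, Φ (P z) = Φ z / 4)
    (p : ℝ) (hp : p ∈ Set.Ioc (0 : ℝ) 1) (i : ℕ) :
    Tendsto
      (fun N : ℕ =>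
        iteratedDeriv i (P^[N]) ((1 : ℂ) - p) * (p : ℂ) ^ ((i : ℤ) - 1) /
          (deriv (P^[N]) ((1 : ℂ) - p) * (i.factorial : ℂ)))
      atTop
      (nhds (iteratedDeriv i Φ ((1 : ℂ) - p) * (p : ℂ) ^ ((i : ℤ) - 1) /
        (deriv Φ ((1 : ℂ) - p) * (i.factorial : ℂ)))) :=
  stmt9_general U hU hIco Φ hΦ hlim h1 hfe p hp i
end

section
/- Let Π be the entire function defined by Π(z) = lim_{N→∞} P^{∘N}(1 + z·2^{−N}), satisfying Π(0)=1, Π'(0)=1 and P(Π(z)) = Π(2z). Then there exists a constant C > 0 such that |Π(i t)| ≤ C / t² for all real t with |t| ≥ 1. -/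
/-!
Write `f(t) = ‖Π(it)‖`. On the imaginary axis `‖1 + z/2^N‖ ≤ 1 + ‖z‖²/4^N`, and near the unit
circle one application of `P` at most triples the excess over `1`; since `3^N/4^N → 0`, this
gives `f ≤ 1`. From `‖P w‖ ≤ ‖w‖(1 + ‖w‖)²/4` the functional equation gives
`f(2t) ≤ f(t)(1 + f(t))²/4`, and `‖P w‖ = 1` with `‖w‖ ≤ 1` forces `w = 1`. So `f(t) = 1` for
some `t ≠ 0` would give `Π = 1` at the points `it/2^k`, which accumulate at `0`, contradicting
`Π'(0) = 1`. Hence `f ≤ δ < 1` on the compact set `1 ≤ |t| ≤ 2`; along `s, 2s, 4s, …` the values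
then decay geometrically, so the factors `(1 + f)²` have a convergent product and
`f(2^n s) = O(4^{-n})`.
-/

open Filter Topology Complex

lemma P_eq_mul_sq (z : ℂ) : P z = z * (1 + z) ^ 2 / 4 := by
  simp only [P]; ring

lemma norm_P (z : ℂ) : ‖P z‖ = ‖z‖ * ‖1 + z‖ ^ 2 / 4 := by
  rw [P_eq_mul_sq, norm_div, norm_mul, norm_pow]; norm_num

lemma norm_P_le (z : ℂ) : ‖P z‖ ≤ ‖z‖ * (1 + ‖z‖) ^ 2 / 4 := by
  have h := norm_add_le (1 : ℂ) z
  rw [norm_one] at h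
  rw [norm_P]
  gcongr

lemma norm_P_le_one_add {ε : ℝ} (hε0 : 0 ≤ ε) (hε : ε ≤ 1 / 2) {z : ℂ} (hz : ‖z‖ ≤ 1 + ε) :
    ‖P z‖ ≤ 1 + 3 * ε :=
  calc ‖P z‖ ≤ ‖z‖ * (1 + ‖z‖) ^ 2 / 4 := norm_P_le z
    _ ≤ (1 + ε) * (1 + (1 + ε)) ^ 2 / 4 := by gcongr
    _ ≤ 1 + 3 * ε := by nlinarith [mul_nonneg hε0 hε0]

lemma norm_iterate_P_le_one_add {ε : ℝ} (hε0 : 0 ≤ ε) {z : ℂ} (hz : ‖z‖ ≤ 1 + ε) :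
    ∀ k : ℕ, 3 ^ k * ε ≤ 1 / 2 → ‖P^[k] z‖ ≤ 1 + 3 ^ k * ε
  | 0, _ => by simpa using hz
  | k + 1, hk => by
    have hk' : 3 ^ k * ε ≤ 1 / 2 := by
      rw [pow_succ] at hk; nlinarith [pow_nonneg (by norm_num : (0 : ℝ) ≤ 3) k]
    rw [Function.iterate_succ_apply', pow_succ, mul_comm _ (3 : ℝ), mul_assoc]
    exact norm_P_le_one_add (by positivity) hk' (norm_iterate_P_le_one_add hε0 hz k hk')

lemma norm_one_add_le_of_re_eq_zero {z : ℂ} (hz : z.re = 0) : ‖1 + z‖ ≤ 1 + ‖z‖ ^ 2 := by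
  have h : ‖1 + z‖ ^ 2 = 1 + ‖z‖ ^ 2 := by
    simp only [Complex.sq_norm, normSq_apply, add_re, one_re, hz, add_im, one_im]; ring
  nlinarith [norm_nonneg (1 + z), sq_nonneg ‖z‖]

lemma re_div_two_pow (z : ℂ) (k : ℕ) : (z / 2 ^ k).re = z.re / 2 ^ k := by
  rw [show (2 : ℂ) ^ k = ((2 ^ k : ℝ) : ℂ) by push_cast; rfl, div_ofReal_re]

lemma eq_one_of_norm_P_eq_one {w : ℂ} (hw : ‖w‖ ≤ 1) (h : ‖P w‖ = 1) : w = 1 := by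
  have h2 : ‖1 + w‖ ^ 2 ≤ 4 := by
    have := norm_add_le (1 : ℂ) w
    rw [norm_one] at this
    nlinarith [norm_nonneg (1 + w)]
  rw [norm_P] at h
  have hw1 : ‖w‖ = 1 := by nlinarith [mul_le_mul_of_nonneg_left h2 (norm_nonneg w)]
  have h21 : ‖1 + w‖ ^ 2 = 4 := by rw [hw1] at h; linarith
  have hsq (u : ℂ) : ‖u‖ ^ 2 = u.re ^ 2 + u.im ^ 2 := by rw [Complex.sq_norm, normSq_apply]; ring
  rw [hsq, add_re, add_im, one_re, one_im, zero_add] at h21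
  have hw1' : w.re ^ 2 + w.im ^ 2 = 1 := by rw [← hsq, hw1, one_pow]
  have hre : w.re = 1 := by nlinarith
  have him : w.im = 0 := by nlinarith
  exact Complex.ext hre him

section Poincare

variable {Pi : ℂ → ℂ}

lemma norm_le_one_of_re_eq_zero
    (hlim : ∀ z, Tendsto (fun N : ℕ => P^[N] (1 + z / 2 ^ N)) atTop (𝓝 (Pi z)))
    {z : ℂ} (hz : z.re = 0) : ‖Pi z‖ ≤ 1 := by
  have hε : Tendsto (fun N : ℕ => ‖z‖ ^ 2 * (3 / 4 : ℝ) ^ N) atTop (𝓝 0) := by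
    simpa using (tendsto_pow_atTop_nhds_zero_of_lt_one (by norm_num : (0 : ℝ) ≤ 3 / 4)
      (by norm_num)).const_mul (‖z‖ ^ 2)
  have hbound : ∀ᶠ N : ℕ in atTop, ‖P^[N] (1 + z / 2 ^ N)‖ ≤ 1 + ‖z‖ ^ 2 * (3 / 4) ^ N := by
    filter_upwards [hε.eventually (eventually_le_nhds (by norm_num : (0 : ℝ) < 1 / 2))] with N hN
    have hpow : 3 ^ N * (‖z‖ ^ 2 / 4 ^ N) = ‖z‖ ^ 2 * (3 / 4 : ℝ) ^ N := by rw [div_pow]; ring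
    rw [← hpow] at hN ⊢
    refine norm_iterate_P_le_one_add (by positivity) ?_ N hN
    calc ‖1 + z / 2 ^ N‖ ≤ 1 + ‖z / 2 ^ N‖ ^ 2 :=
          norm_one_add_le_of_re_eq_zero (by rw [re_div_two_pow, hz, zero_div])
      _ = 1 + ‖z‖ ^ 2 / 4 ^ N := by
        rw [norm_div, norm_pow, Complex.norm_two, div_pow, ← pow_mul, mul_comm, pow_mul]
        norm_num
  exact le_of_tendsto_of_tendsto (hlim z).norm (by simpa using hε.const_add 1) hbound

lemma eq_one_of_norm_two_mul_eq_one
    (hlim : ∀ z, Tendsto (fun N : ℕ => P^[N] (1 + z / 2 ^ N)) atTop (𝓝 (Pi z)))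
    (hfe : ∀ z, P (Pi z) = Pi (2 * z)) {z : ℂ} (hz : z.re = 0) (h : ‖Pi (2 * z)‖ = 1) :
    Pi z = 1 :=
  eq_one_of_norm_P_eq_one (norm_le_one_of_re_eq_zero hlim hz) (by rw [hfe, h])

lemma norm_lt_one_of_re_eq_zero
    (hlim : ∀ z, Tendsto (fun N : ℕ => P^[N] (1 + z / 2 ^ N)) atTop (𝓝 (Pi z)))
    (hfe : ∀ z, P (Pi z) = Pi (2 * z)) (han : AnalyticAt ℂ Pi 0) (hd : deriv Pi 0 ≠ 0)
    {z : ℂ} (hz0 : z ≠ 0) (hz : z.re = 0) : ‖Pi z‖ < 1 := by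
  refine (norm_le_one_of_re_eq_zero hlim hz).lt_of_ne fun hone => hd ?_
  have hre (k : ℕ) : (z / 2 ^ k).re = 0 := by rw [re_div_two_pow, hz, zero_div]
  have hhalf (k : ℕ) : 2 * (z / 2 ^ (k + 1)) = z / 2 ^ k := by rw [pow_succ]; field_simp
  have hnorm (k : ℕ) : ‖Pi (z / 2 ^ k)‖ = 1 := by
    induction k with
    | zero => simpa using hone
    | succ k ih => rw [eq_one_of_norm_two_mul_eq_one hlim hfe (hre _) (by rwa [hhalf]), norm_one]
  have hzk : Tendsto (fun k : ℕ => z / 2 ^ (k + 1)) atTop (𝓝[≠] 0) := by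
    refine tendsto_nhdsWithin_of_tendsto_nhds_of_eventually_within _ ?_
      (Eventually.of_forall fun k => by simp [hz0])
    have h := ((tendsto_pow_atTop_nhds_zero_of_norm_lt_one (x := (2 : ℂ)⁻¹)
      (by norm_num)).const_mul z).comp (tendsto_add_atTop_nat 1)
    simpa [Function.comp_def, div_eq_mul_inv, inv_pow] using h
  have hfreq : ∃ᶠ w in 𝓝[≠] 0, Pi w = 1 :=
    hzk.frequently <| Frequently.of_forall fun k =>
      eq_one_of_norm_two_mul_eq_one hlim hfe (hre _) (by rw [hhalf]; exact hnorm k)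
  have hconst : Pi =ᶠ[𝓝 0] fun _ => (1 : ℂ) :=
    (han.frequently_eq_iff_eventually_eq analyticAt_const).1 hfreq
  simpa using hconst.deriv_eq

end Poincare

section DoublingRecursion

variable {a : ℕ → ℝ} {δ : ℝ}

lemma le_mul_pow_of_le_mul_one_add_sq (ha : ∀ n, 0 ≤ a n)
    (hstep : ∀ n, a (n + 1) ≤ a n * (1 + a n) ^ 2 / 4) (h0 : a 0 ≤ δ) (hδ : δ ≤ 1) (n : ℕ) :
    a n ≤ δ * ((1 + δ) ^ 2 / 4) ^ n := by
  have hδ0 : 0 ≤ δ := (ha 0).trans h0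
  have hr1 : (1 + δ) ^ 2 / 4 ≤ 1 := by nlinarith
  induction n with
  | zero => simpa using h0
  | succ n ih =>
    have han : a n ≤ δ := ih.trans (mul_le_of_le_one_right hδ0 (pow_le_one₀ (by positivity) hr1))
    have := ha n
    calc a (n + 1) ≤ a n * (1 + a n) ^ 2 / 4 := hstep n
      _ ≤ δ * ((1 + δ) ^ 2 / 4) ^ n * (1 + δ) ^ 2 / 4 := by gcongr
      _ = δ * ((1 + δ) ^ 2 / 4) ^ (n + 1) := by ring

lemma one_add_sq_le_exp_two_mul (x : ℝ) (hx : -1 ≤ x) : (1 + x) ^ 2 ≤ Real.exp (2 * x) := by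
  calc (1 + x) ^ 2 ≤ Real.exp x ^ 2 := by gcongr; linarith; linarith [Real.add_one_le_exp x]
    _ = Real.exp (2 * x) := by rw [sq, ← Real.exp_add, two_mul]

lemma four_pow_mul_le_of_le_mul_one_add_sq (ha : ∀ n, 0 ≤ a n)
    (hstep : ∀ n, a (n + 1) ≤ a n * (1 + a n) ^ 2 / 4) (h0 : a 0 ≤ δ) (hδ : δ < 1) (n : ℕ) :
    4 ^ n * a n ≤ δ * Real.exp (2 * δ / (1 - (1 + δ) ^ 2 / 4)) := by
  set r := (1 + δ) ^ 2 / 4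
  have hδ0 : 0 ≤ δ := (ha 0).trans h0
  have hr1 : r < 1 := by simp only [r]; nlinarith
  have hgeom (n : ℕ) := le_mul_pow_of_le_mul_one_add_sq ha hstep h0 hδ.le n
  have hprod : 4 ^ n * a n ≤ δ * Real.exp (2 * δ * ∑ k ∈ Finset.range n, r ^ k) := by
    induction n with
    | zero => simpa using h0
    | succ n ih =>
      have hsq : (1 + a n) ^ 2 ≤ Real.exp (2 * (δ * r ^ n)) :=
        (one_add_sq_le_exp_two_mul _ (by linarith [ha n])).trans
          (Real.exp_le_exp.2 (by linarith [hgeom n]))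
      calc 4 ^ (n + 1) * a (n + 1) ≤ 4 ^ n * a n * (1 + a n) ^ 2 := by
            have := hstep n; rw [pow_succ]; nlinarith [pow_pos (by norm_num : (0 : ℝ) < 4) n]
        _ ≤ δ * Real.exp (2 * δ * ∑ k ∈ Finset.range n, r ^ k) * Real.exp (2 * (δ * r ^ n)) := by
            gcongr
        _ = δ * Real.exp (2 * δ * ∑ k ∈ Finset.range (n + 1), r ^ k) := by
            rw [Finset.sum_range_succ, mul_assoc, ← Real.exp_add]; ring_nf
  have hsum : ∑ k ∈ Finset.range n, r ^ k ≤ 1 / (1 - r) := by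
    have h := geom_sum_Ico_le_of_lt_one (m := 0) (n := n) (by positivity : 0 ≤ r) hr1
    rwa [← Finset.range_eq_Ico, pow_zero] at h
  calc 4 ^ n * a n ≤ δ * Real.exp (2 * δ * ∑ k ∈ Finset.range n, r ^ k) := hprod
    _ ≤ δ * Real.exp (2 * δ / (1 - r)) := by
        gcongr
        calc 2 * δ * ∑ k ∈ Finset.range n, r ^ k ≤ 2 * δ * (1 / (1 - r)) := by gcongr
          _ = 2 * δ / (1 - r) := by ring

end DoublingRecursion

lemma exists_two_pow_mul_eq {t : ℝ} (ht : 1 ≤ |t|) :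
    ∃ n : ℕ, ∃ s : ℝ, 2 ^ n * s = t ∧ 1 ≤ |s| ∧ |s| ≤ 2 := by
  obtain ⟨n, hn1, hn2⟩ := exists_nat_pow_near ht one_lt_two
  have h2n : (0 : ℝ) < 2 ^ n := by positivity
  refine ⟨n, t / 2 ^ n, mul_div_cancel₀ t h2n.ne', ?_, ?_⟩
  · rwa [abs_div, abs_of_pos h2n, le_div_iff₀ h2n, one_mul]
  · rw [abs_div, abs_of_pos h2n, div_le_iff₀ h2n, mul_comm, ← pow_succ]
    exact hn2.le

lemma exists_le_div_sq_of_le_mul_one_add_sq {f : ℝ → ℝ} (hf : Continuous f) (hf0 : ∀ t, 0 ≤ f t)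
    (hstep : ∀ t, f (2 * t) ≤ f t * (1 + f t) ^ 2 / 4) (hlt : ∀ t, t ≠ 0 → f t < 1) :
    ∃ C, 0 < C ∧ ∀ t, 1 ≤ |t| → f t ≤ C / t ^ 2 := by
  set K := Set.Icc (-2 : ℝ) 2 ∩ {s | 1 ≤ |s|}
  have hK : IsCompact K := isCompact_Icc.inter_right (isClosed_le continuous_const continuous_abs)
  obtain ⟨s₀, hs₀, hmax⟩ := hK.exists_isMaxOn ⟨1, by norm_num [K]⟩ hf.continuousOn
  have hδ : f s₀ < 1 := hlt s₀ fun h => by norm_num [K, h] at hs₀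
  set C₀ := f s₀ * Real.exp (2 * f s₀ / (1 - (1 + f s₀) ^ 2 / 4))
  have hC₀ : 0 ≤ C₀ := mul_nonneg (hf0 s₀) (Real.exp_pos _).le
  refine ⟨4 * C₀ + 1, by linarith, fun t ht => ?_⟩
  obtain ⟨n, s, rfl, hs1, hs2⟩ := exists_two_pow_mul_eq ht
  have hsK : s ∈ K := ⟨abs_le.1 hs2, hs1⟩
  have hdecay : 4 ^ n * f (2 ^ n * s) ≤ C₀ :=
    four_pow_mul_le_of_le_mul_one_add_sq (a := fun k => f (2 ^ k * s)) (fun _ => hf0 _)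
    (fun k => by simpa only [pow_succ, mul_comm, mul_left_comm] using hstep (2 ^ k * s))
    (by simpa using hmax hsK) hδ n
  have hsq : (2 ^ n * s) ^ 2 = 4 ^ n * s ^ 2 := by
    rw [mul_pow, ← pow_mul, mul_comm n, pow_mul]; norm_num
  have hs4 : s ^ 2 ≤ 4 := by nlinarith [sq_abs s, abs_nonneg s]
  have hs0 : 0 < s ^ 2 := by nlinarith [sq_abs s]
  rw [le_div_iff₀ (by rw [hsq]; exact mul_pos (by positivity) hs0), hsq]
  nlinarith [mul_le_mul hdecay hs4 hs0.le hC₀]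

theorem stmt17_general (Pi : ℂ → ℂ)
    (hlim : TendstoLocallyUniformly
      (fun (N : ℕ) (z : ℂ) => P^[N] (1 + z / 2 ^ N)) Pi atTop)
    (hdiff : Differentiable ℂ Pi)
    (h1 : deriv Pi 0 = 1)
    (hfe : ∀ z : ℂ, P (Pi z) = Pi (2 * z)) :
    ∃ C : ℝ, 0 < C ∧ ∀ t : ℝ, 1 ≤ |t| → ‖Pi (Complex.I * t)‖ ≤ C / t ^ 2 := by
  have hpt (z : ℂ) : Tendsto (fun N : ℕ => P^[N] (1 + z / 2 ^ N)) atTop (𝓝 (Pi z)) :=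
    hlim.tendstoLocallyUniformlyOn.tendsto_at (Set.mem_univ z)
  refine exists_le_div_sq_of_le_mul_one_add_sq (f := fun t : ℝ => ‖Pi (I * t)‖)
    (hdiff.continuous.comp (by fun_prop)).norm (fun _ => norm_nonneg _) (fun t => ?_)
    (fun t ht => ?_)
  · rw [ofReal_mul, ofReal_ofNat, mul_left_comm, ← hfe]
    exact norm_P_le _
  · exact norm_lt_one_of_re_eq_zero hpt hfe (hdiff.analyticAt 0) (h1 ▸ one_ne_zero)
      (by simpa using ht) (by simp)

/-- for the entire Poincaré function `Π = lim P^{∘N}(1 + z·2^{-N})`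
(with `Π(0) = 1`, `Π'(0) = 1`, `P(Π(z)) = Π(2z)`), there is `C > 0` with
`|Π(it)| ≤ C/t²` for all real `t` with `|t| ≥ 1`. -/
theorem stmt17 (Pi : ℂ → ℂ)
    (hlim : TendstoLocallyUniformly
      (fun (N : ℕ) (z : ℂ) => P^[N] (1 + z / 2 ^ N)) Pi atTop)
    (hdiff : Differentiable ℂ Pi)
    (h0 : Pi 0 = 1) (h1 : deriv Pi 0 = 1)
    (hfe : ∀ z : ℂ, P (Pi z) = Pi (2 * z)) :
    ∃ C : ℝ, 0 < C ∧ ∀ t : ℝ, 1 ≤ |t| → ‖Pi (Complex.I * t)‖ ≤ C / t ^ 2 :=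
  stmt17_general Pi hlim hdiff h1 hfe
end
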